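/- Let μ be a nonnegative Borel measure on (0,∞) with ∫₀^∞ min(1,z) μ(dz) < ∞, let w(s) := μ((s,∞)) for s > 0, and let k ≥ 0, a > 0, and c ≤ 0 be real numbers. Suppose v : [0,∞) → ℝ is bounded and continuous with v(0) = 0 and satisfies, for every t ≥ 0, k·v(t) + ∫₀^t w(t − s) v(s) ds = (c − a) · ∫₀^t v(s) ds. Then v(t) = 0 for every t ≥ 0. -/
import Mathlib


open MeasureTheory

section Aux

/-- Tails of a Lévy measure are finite. -/
lemma levy_tail_lt_top (μ : Measure ℝ)
    (hμint : ∫⁻ z in Set.Ioi (0:ℝ), ENNReal.ofReal (min 1 z) ∂μ ≠ ⊤)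
    {ε : ℝ} (hε : 0 < ε) : μ (Set.Ioi ε) < ⊤ := by
  by_contra h
  push_neg at h
  have htop : μ (Set.Ioi ε) = ⊤ := top_le_iff.mp h
  have h1 : ENNReal.ofReal (min 1 ε) * μ (Set.Ioi ε)
      ≤ ∫⁻ z in Set.Ioi (0:ℝ), ENNReal.ofReal (min 1 z) ∂μ := by
    calc ENNReal.ofReal (min 1 ε) * μ (Set.Ioi ε)
        = ∫⁻ _ in Set.Ioi ε, ENNReal.ofReal (min 1 ε) ∂μ := by
          rw [setLIntegral_const]
      _ ≤ ∫⁻ z in Set.Ioi ε, ENNReal.ofReal (min 1 z) ∂μ := by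
          refine setLIntegral_mono ((measurable_const.min measurable_id).ennreal_ofReal) ?_
          intro z hz
          exact ENNReal.ofReal_le_ofReal (min_le_min le_rfl (le_of_lt hz))
      _ ≤ ∫⁻ z in Set.Ioi (0:ℝ), ENNReal.ofReal (min 1 z) ∂μ :=
          lintegral_mono_set (Set.Ioi_subset_Ioi hε.le)
  have h2 : ENNReal.ofReal (min 1 ε) * μ (Set.Ioi ε) = ⊤ := by
    rw [htop, ENNReal.mul_top]
    simp only [ne_eq, ENNReal.ofReal_eq_zero, not_le]
    exact lt_min one_pos hε
  rw [h2] at h1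
  exact hμint (top_le_iff.mp h1)

/-- A Lévy measure (vanishing on `(-∞,0]` with integrable tail) is σ-finite. -/
lemma levy_sigmaFinite (μ : Measure ℝ) (hμ0 : μ (Set.Iic 0) = 0)
    (hμint : ∫⁻ z in Set.Ioi (0:ℝ), ENNReal.ofReal (min 1 z) ∂μ ≠ ⊤) :
    SigmaFinite μ := by
  refine ⟨⟨⟨fun n => Set.Iic 0 ∪ Set.Ioi (1/(n+1) : ℝ), fun _ => trivial, ?_, ?_⟩⟩⟩
  · intro n
    refine lt_of_le_of_lt (measure_union_le _ _) ?_
    rw [hμ0, zero_add]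
    exact levy_tail_lt_top μ hμint (by positivity)
  · ext x
    simp only [Set.mem_iUnion, Set.mem_union, Set.mem_Iic, Set.mem_Ioi, Set.mem_univ, iff_true]
    rcases le_or_gt x 0 with hx | hx
    · exact ⟨0, Or.inl hx⟩
    · obtain ⟨n, hn⟩ := exists_nat_one_div_lt hx
      exact ⟨n, Or.inr hn⟩

/-- Tonelli computation for the convolution with the tail of `μ`. -/
lemma levy_swap (μ : Measure ℝ) [SigmaFinite μ] (b : ℝ)
    (f : ℝ → ENNReal) (hf : Measurable f) :
    ∫⁻ s in Set.Ioc 0 b, f s * μ (Set.Ioi (b - s))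
      = ∫⁻ z, (∫⁻ s in Set.Ioc (max 0 (b - z)) b, f s) ∂μ := by
  have hU : MeasurableSet {p : ℝ × ℝ | b - p.1 < p.2} :=
    measurableSet_lt (measurable_const.sub measurable_fst) measurable_snd
  have hF : Measurable fun p : ℝ × ℝ =>
      {p : ℝ × ℝ | b - p.1 < p.2}.indicator (fun p => f p.1) p :=
    (hf.comp measurable_fst).indicator hU
  calc ∫⁻ s in Set.Ioc 0 b, f s * μ (Set.Ioi (b - s))
      = ∫⁻ s in Set.Ioc 0 b, ∫⁻ z,
          {p : ℝ × ℝ | b - p.1 < p.2}.indicator (fun p => f p.1) (s, z) ∂μ := by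
        refine lintegral_congr fun s => ?_
        have : ∀ z : ℝ, {p : ℝ × ℝ | b - p.1 < p.2}.indicator (fun p => f p.1) (s, z)
            = (Set.Ioi (b - s)).indicator (fun _ => f s) z := by
          intro z
          simp only [Set.indicator, Set.mem_setOf_eq, Set.mem_Ioi]
        simp_rw [this]
        rw [lintegral_indicator measurableSet_Ioi, setLIntegral_const]
    _ = ∫⁻ z, (∫⁻ s in Set.Ioc 0 b,
          {p : ℝ × ℝ | b - p.1 < p.2}.indicator (fun p => f p.1) (s, z)) ∂μ := by
        refine lintegral_lintegral_swap (μ := volume.restrict (Set.Ioc 0 b)) (ν := μ)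
          (f := fun s z => {p : ℝ × ℝ | b - p.1 < p.2}.indicator (fun p => f p.1) (s, z)) ?_
        exact Measurable.aemeasurable ((hf.comp measurable_fst).indicator hU)
    _ = ∫⁻ z, (∫⁻ s in Set.Ioc (max 0 (b - z)) b, f s) ∂μ := by
        refine lintegral_congr fun z => ?_
        have h1 : ∀ s : ℝ, {p : ℝ × ℝ | b - p.1 < p.2}.indicator (fun p => f p.1) (s, z)
            = (Set.Ioi (b - z)).indicator f s := by
          intro s
          simp only [Set.indicator, Set.mem_setOf_eq, Set.mem_Ioi]
          by_cases h : b - s < z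
          · rw [if_pos h, if_pos (by linarith)]
          · rw [if_neg h, if_neg (by intro hh; exact h (by linarith))]
        simp_rw [h1]
        rw [lintegral_indicator measurableSet_Ioi, Measure.restrict_restrict measurableSet_Ioi]
        congr 1
        congr 1
        ext s
        simp only [Set.mem_inter_iff, Set.mem_Ioi, Set.mem_Ioc, max_lt_iff]
        tauto

/-- Key positivity: at a maximum point of the primitive, the convolution term is nonnegative. -/
lemma conv_nonneg (μ : Measure ℝ) (hμ0 : μ (Set.Iic 0) = 0)
    (hμint : ∫⁻ z in Set.Ioi (0:ℝ), ENNReal.ofReal (min 1 z) ∂μ ≠ ⊤)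
    (u : ℝ → ℝ) (hu : Continuous u) (M : ℝ) (hub : ∀ s, |u s| ≤ M)
    {b : ℝ} (hb0 : 0 < b)
    (hmax : ∀ s ∈ Set.Icc (0:ℝ) b, (∫ x in (0:ℝ)..s, u x) ≤ ∫ x in (0:ℝ)..b, u x) :
    0 ≤ ∫ s in (0:ℝ)..b, (μ (Set.Ioi (b - s))).toReal * u s := by
  haveI : SigmaFinite μ := levy_sigmaFinite μ hμ0 hμint
  have hM0 : 0 ≤ M := (abs_nonneg (u 0)).trans (hub 0)
  set p : ℝ → ℝ := fun s => max (u s) 0 with hp_def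
  set q : ℝ → ℝ := fun s => max (-u s) 0 with hq_def
  have hp : Continuous p := hu.max continuous_const
  have hq : Continuous q := hu.neg.max continuous_const
  have hp0 : ∀ s, 0 ≤ p s := fun s => le_max_right _ _
  have hq0 : ∀ s, 0 ≤ q s := fun s => le_max_right _ _
  have hpM : ∀ s, p s ≤ M := fun s => max_le ((le_abs_self _).trans (hub s)) hM0
  have hqM : ∀ s, q s ≤ M := fun s => max_le ((neg_le_abs _).trans (hub s)) hM0
  have hpq : ∀ s, u s = p s - q s := fun s => (max_zero_sub_max_neg_zero_eq_self (u s)).symm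
  -- measurability of the tail
  have hanti : Antitone fun x : ℝ => μ (Set.Ioi x) :=
    fun x y hxy => measure_mono (Set.Ioi_subset_Ioi hxy)
  have hwmeas : Measurable fun s : ℝ => μ (Set.Ioi (b - s)) :=
    hanti.measurable.comp (measurable_const.sub measurable_id)
  -- the two iterated integrals
  set A : ENNReal := ∫⁻ s in Set.Ioc 0 b, ENNReal.ofReal (p s) * μ (Set.Ioi (b - s)) with hA_def
  set B : ENNReal := ∫⁻ s in Set.Ioc 0 b, ENNReal.ofReal (q s) * μ (Set.Ioi (b - s)) with hB_def
  set J : ENNReal := ∫⁻ s in Set.Ioc 0 b, μ (Set.Ioi (b - s)) with hJ_def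
  -- J is finite
  have hJswap : J = ∫⁻ z, (∫⁻ s in Set.Ioc (max 0 (b - z)) b, 1) ∂μ := by
    rw [hJ_def, ← levy_swap μ b (fun _ => 1) measurable_const]
    simp
  have hmin : ∀ z : ℝ, (∫⁻ _ in Set.Ioc (max 0 (b - z)) b, (1:ENNReal))
      = ENNReal.ofReal (min b z) := by
    intro z
    rw [setLIntegral_const, one_mul, Real.volume_Ioc]
    congr 1
    rcases le_total (b - z) 0 with h | h
    · rw [max_eq_left h, sub_zero, min_eq_left (by linarith)]
    · rw [max_eq_right h, min_eq_right (by linarith)]; ring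
  have hJfin : J < ⊤ := by
    rw [hJswap]
    simp_rw [hmin]
    have hsplit : ∫⁻ z, ENNReal.ofReal (min b z) ∂μ
        = ∫⁻ z in Set.Ioi (0:ℝ), ENNReal.ofReal (min b z) ∂μ := by
      rw [← lintegral_add_compl (fun z => ENNReal.ofReal (min b z)) measurableSet_Ioi]
      have : ∫⁻ z in (Set.Ioi (0:ℝ))ᶜ, ENNReal.ofReal (min b z) ∂μ = 0 := by
        apply setLIntegral_measure_zero
        rwa [Set.compl_Ioi]
      rw [this, add_zero]
    rw [hsplit]
    have hbd : ∫⁻ z in Set.Ioi (0:ℝ), ENNReal.ofReal (min b z) ∂μ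
        ≤ ∫⁻ z in Set.Ioi (0:ℝ), ENNReal.ofReal (max 1 b) * ENNReal.ofReal (min 1 z) ∂μ := by
      refine setLIntegral_mono
        (measurable_const.mul ((measurable_const.min measurable_id).ennreal_ofReal)) ?_
      intro z hz
      rw [← ENNReal.ofReal_mul (by positivity)]
      refine ENNReal.ofReal_le_ofReal ?_
      rcases le_total z 1 with h1 | h1
      · rw [min_eq_right h1]
        calc min b z ≤ z := min_le_right _ _
          _ = 1 * z := (one_mul z).symm
          _ ≤ max 1 b * z := by
            apply mul_le_mul_of_nonneg_right (le_max_left _ _) (le_of_lt hz)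
      · rw [min_eq_left h1, mul_one]
        exact (min_le_left _ _).trans (le_max_right _ _)
    refine lt_of_le_of_lt hbd ?_
    rw [lintegral_const_mul' _ _ ENNReal.ofReal_ne_top]
    exact ENNReal.mul_lt_top ENNReal.ofReal_lt_top (lt_top_iff_ne_top.mpr hμint)
  -- A and B are finite
  have hboundJ : ∀ (g : ℝ → ℝ), (∀ s, 0 ≤ g s) → (∀ s, g s ≤ M) →
      (∫⁻ s in Set.Ioc 0 b, ENNReal.ofReal (g s) * μ (Set.Ioi (b - s)))
        ≤ ENNReal.ofReal M * J := by
    intro g hg0 hgM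
    calc (∫⁻ s in Set.Ioc 0 b, ENNReal.ofReal (g s) * μ (Set.Ioi (b - s)))
        ≤ ∫⁻ s in Set.Ioc 0 b, ENNReal.ofReal M * μ (Set.Ioi (b - s)) := by
          refine lintegral_mono fun s => ?_
          exact mul_le_mul_left (ENNReal.ofReal_le_ofReal (hgM s)) _
      _ = ENNReal.ofReal M * J := by
          rw [hJ_def, lintegral_const_mul' _ _ ENNReal.ofReal_ne_top]
  have hAfin : A < ⊤ := lt_of_le_of_lt (hboundJ p hp0 hpM)
    (ENNReal.mul_lt_top ENNReal.ofReal_lt_top hJfin)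
  have hBfin : B < ⊤ := lt_of_le_of_lt (hboundJ q hq0 hqM)
    (ENNReal.mul_lt_top ENNReal.ofReal_lt_top hJfin)
  -- B ≤ A via the swapped representation and the maximality of V at b
  have hBA : B ≤ A := by
    rw [hA_def, hB_def, levy_swap μ b _ hp.measurable.ennreal_ofReal,
      levy_swap μ b _ hq.measurable.ennreal_ofReal]
    refine lintegral_mono fun z => ?_
    set m : ℝ := max 0 (b - z) with hm_def
    rcases le_or_gt b m with hbm | hmb
    · rw [Set.Ioc_eq_empty (not_lt.mpr hbm)]
      simp
    · have hm0 : 0 ≤ m := le_max_left _ _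
      have hmT : m ∈ Set.Icc (0:ℝ) b := ⟨hm0, hmb.le⟩
      have hiu : ∀ x y : ℝ, IntervalIntegrable u volume x y := fun x y =>
        hu.intervalIntegrable x y
      have hVmb : 0 ≤ ∫ x in m..b, u x := by
        have := hmax m hmT
        have heq2 : (∫ x in (0:ℝ)..b, u x) - ∫ x in (0:ℝ)..m, u x = ∫ x in m..b, u x :=
          intervalIntegral.integral_interval_sub_left (hiu 0 b) (hiu 0 m)
        linarith
      rw [intervalIntegral.integral_of_le hmb.le] at hVmb
      have hpint : IntegrableOn p (Set.Ioc m b) volume := hp.integrableOn_Ioc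
      have hqint : IntegrableOn q (Set.Ioc m b) volume := hq.integrableOn_Ioc
      have hsplit : (∫ x in Set.Ioc m b, u x)
          = (∫ x in Set.Ioc m b, p x) - ∫ x in Set.Ioc m b, q x := by
        rw [← integral_sub hpint hqint]
        exact integral_congr_ae (Filter.Eventually.of_forall fun s => hpq s)
      have hqp : (∫ x in Set.Ioc m b, q x) ≤ ∫ x in Set.Ioc m b, p x := by
        rw [hsplit] at hVmb; linarith
      have h1 : ENNReal.ofReal (∫ x in Set.Ioc m b, q x)
          = ∫⁻ s in Set.Ioc m b, ENNReal.ofReal (q s) :=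
        ofReal_integral_eq_lintegral_ofReal hqint
          (Filter.Eventually.of_forall fun s => hq0 s)
      have h2 : ENNReal.ofReal (∫ x in Set.Ioc m b, p x)
          = ∫⁻ s in Set.Ioc m b, ENNReal.ofReal (p s) :=
        ofReal_integral_eq_lintegral_ofReal hpint
          (Filter.Eventually.of_forall fun s => hp0 s)
      rw [← h1, ← h2]
      exact ENNReal.ofReal_le_ofReal hqp
  -- identify the real convolution integral with A.toReal - B.toReal
  have hae_lt : ∀ᵐ s ∂(volume.restrict (Set.Ioc 0 b)), s < b := by
    have h1 : ∀ᵐ s ∂(volume.restrict (Set.Ioc 0 b)), s ∈ Set.Ioc 0 b :=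
      ae_restrict_mem measurableSet_Ioc
    have h2 : ∀ᵐ (s : ℝ) ∂(volume.restrict (Set.Ioc 0 b)), s ≠ b := by
      refine Filter.Eventually.filter_mono (ae_mono Measure.restrict_le_self) ?_
      rw [ae_iff]
      have : {s : ℝ | ¬ s ≠ b} = {b} := by ext s; simp
      rw [this]
      exact measure_singleton b
    filter_upwards [h1, h2] with s hs hsne
    exact lt_of_le_of_ne hs.2 hsne
  have hofReal : ∀ (g : ℝ → ℝ), (∀ s, 0 ≤ g s) →
      (∫⁻ s in Set.Ioc 0 b, ENNReal.ofReal ((μ (Set.Ioi (b - s))).toReal * g s))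
        = ∫⁻ s in Set.Ioc 0 b, ENNReal.ofReal (g s) * μ (Set.Ioi (b - s)) := by
    intro g hg0
    refine lintegral_congr_ae ?_
    filter_upwards [hae_lt] with s hs
    have hfin : μ (Set.Ioi (b - s)) ≠ ⊤ :=
      (levy_tail_lt_top μ hμint (by linarith)).ne
    rw [ENNReal.ofReal_mul ENNReal.toReal_nonneg, ENNReal.ofReal_toReal hfin, mul_comm]
  have hgmeas : Measurable fun s : ℝ => (μ (Set.Ioi (b - s))).toReal :=
    hwmeas.ennreal_toReal
  have hint : ∀ (g : ℝ → ℝ), Continuous g → (∀ s, 0 ≤ g s) →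
      (∀ s, g s ≤ M) →
      IntegrableOn (fun s => (μ (Set.Ioi (b - s))).toReal * g s) (Set.Ioc 0 b) volume ∧
      (∫ s in Set.Ioc 0 b, (μ (Set.Ioi (b - s))).toReal * g s)
        = (∫⁻ s in Set.Ioc 0 b, ENNReal.ofReal (g s) * μ (Set.Ioi (b - s))).toReal := by
    intro g hg hg0 hgM
    have hmeas : AEStronglyMeasurable (fun s => (μ (Set.Ioi (b - s))).toReal * g s)
        (volume.restrict (Set.Ioc 0 b)) :=
      (hgmeas.mul hg.measurable).aestronglyMeasurable
    have hnn : 0 ≤ᶠ[ae (volume.restrict (Set.Ioc 0 b))]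
        fun s => (μ (Set.Ioi (b - s))).toReal * g s :=
      Filter.Eventually.of_forall fun s => mul_nonneg ENNReal.toReal_nonneg (hg0 s)
    have hfin : (∫⁻ s in Set.Ioc 0 b,
        ENNReal.ofReal ((μ (Set.Ioi (b - s))).toReal * g s)) < ⊤ := by
      rw [hofReal g hg0]
      exact lt_of_le_of_lt (hboundJ g hg0 hgM)
        (ENNReal.mul_lt_top ENNReal.ofReal_lt_top hJfin)
    refine ⟨⟨hmeas, (hasFiniteIntegral_iff_ofReal hnn).mpr hfin⟩, ?_⟩
    rw [integral_eq_lintegral_of_nonneg_ae hnn hmeas, hofReal g hg0]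
  obtain ⟨hpint2, hpval⟩ := hint p hp hp0 hpM
  obtain ⟨hqint2, hqval⟩ := hint q hq hq0 hqM
  have hCval : (∫ s in (0:ℝ)..b, (μ (Set.Ioi (b - s))).toReal * u s)
      = A.toReal - B.toReal := by
    rw [intervalIntegral.integral_of_le hb0.le]
    have hsplit : (∫ s in Set.Ioc 0 b, (μ (Set.Ioi (b - s))).toReal * u s)
        = ∫ s in Set.Ioc 0 b, ((μ (Set.Ioi (b - s))).toReal * p s
            - (μ (Set.Ioi (b - s))).toReal * q s) := by
      refine integral_congr_ae (Filter.Eventually.of_forall fun s => ?_)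
      show (μ (Set.Ioi (b - s))).toReal * u s
          = (μ (Set.Ioi (b - s))).toReal * p s - (μ (Set.Ioi (b - s))).toReal * q s
      rw [← mul_sub, ← hpq s]
    rw [hsplit, integral_sub hpint2 hqint2, hpval, hqval]
  rw [hCval, sub_nonneg]
  exact (ENNReal.toReal_le_toReal hBfin.ne hAfin.ne).mpr hBA

/-- Main maximum-principle lemma: the primitive of a solution stays `≤ 0`. -/
lemma primitive_nonpos (μ : Measure ℝ) (hμ0 : μ (Set.Iic 0) = 0)
    (hμint : ∫⁻ z in Set.Ioi (0:ℝ), ENNReal.ofReal (min 1 z) ∂μ ≠ ⊤)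
    (k a c : ℝ) (hk : 0 ≤ k) (ha : 0 < a) (hc : c ≤ 0)
    (u : ℝ → ℝ) (hu : Continuous u)
    (M : ℝ) (hub : ∀ s, |u s| ≤ M)
    (hueq : ∀ t ≥ (0:ℝ),
      k * u t + ∫ s in (0:ℝ)..t, (μ (Set.Ioi (t - s))).toReal * u s
        = (c - a) * ∫ s in (0:ℝ)..t, u s) :
    ∀ T ≥ (0:ℝ), (∫ s in (0:ℝ)..T, u s) ≤ 0 := by
  intro T hT
  by_contra hpos
  push_neg at hpos
  set V : ℝ → ℝ := fun r => ∫ s in (0:ℝ)..r, u s with hV_def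
  have hVd : ∀ x : ℝ, HasDerivAt V (u x) x := fun x =>
    intervalIntegral.integral_hasDerivAt_right (hu.intervalIntegrable 0 x)
      (hu.stronglyMeasurable.stronglyMeasurableAtFilter) hu.continuousAt
  have hVc : Continuous V :=
    continuous_iff_continuousAt.mpr fun x => (hVd x).continuousAt
  obtain ⟨b, hbmem, hbmax⟩ := (isCompact_Icc (a := (0:ℝ)) (b := T)).exists_isMaxOn
    ⟨0, by simp [hT]⟩ hVc.continuousOn
  have hbT : b ≤ T := hbmem.2
  have hVb : 0 < V b := lt_of_lt_of_le hpos (hbmax ⟨hT, le_refl T⟩)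
  have hV0 : V 0 = 0 := intervalIntegral.integral_same
  have hb0 : 0 < b := by
    rcases lt_or_eq_of_le hbmem.1 with h | h
    · exact h
    · exfalso; rw [← h, hV0] at hVb; exact lt_irrefl 0 hVb
  -- u b ≥ 0 by the left-slope argument
  have hub0 : 0 ≤ u b := by
    have hd := (hVd b).hasDerivWithinAt (s := Set.Iio b)
    rw [hasDerivWithinAt_iff_tendsto_slope] at hd
    have hdiff : Set.Iio b \ {b} = Set.Iio b := by
      apply Set.diff_singleton_eq_self; simp
    rw [hdiff] at hd
    refine ge_of_tendsto hd ?_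
    filter_upwards [Ioo_mem_nhdsLT_of_mem (⟨hb0, le_refl b⟩ : b ∈ Set.Ioc 0 b)] with s hs
    rw [slope_def_field]
    rw [div_nonneg_iff]
    right
    constructor
    · have : V s ≤ V b := hbmax ⟨hs.1.le, hs.2.le.trans hbT⟩
      linarith
    · linarith [hs.2]
  -- the convolution term is nonnegative
  have hconv : 0 ≤ ∫ s in (0:ℝ)..b, (μ (Set.Ioi (b - s))).toReal * u s := by
    refine conv_nonneg μ hμ0 hμint u hu M hub hb0 fun s hs => ?_
    exact hbmax ⟨hs.1, hs.2.trans hbT⟩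
  -- contradiction with the equation at b
  have heqb := hueq b hb0.le
  have hlhs : 0 ≤ k * u b + ∫ s in (0:ℝ)..b, (μ (Set.Ioi (b - s))).toReal * u s :=
    add_nonneg (mul_nonneg hk hub0) hconv
  have hrhs : (c - a) * V b < 0 :=
    mul_neg_of_neg_of_pos (by linarith) hVb
  rw [heqb] at hlhs
  exact absurd hlhs (not_le.mpr hrhs)

end Aux

/-- uniqueness for the homogeneous generalized time-fractional equation:
if `v` is bounded continuous on `[0,∞)`, `v 0 = 0`, and
`k v(t) + ∫₀^t w(t-s) v(s) ds = (c - a) ∫₀^t v(s) ds` where `w(s) = μ((s,∞))` is the tail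
of a Lévy measure, `k ≥ 0`, `a > 0`, `c ≤ 0`, then `v ≡ 0` on `[0,∞)`. -/
theorem homogeneous_equation_uniqueness (μ : Measure ℝ) (hμ0 : μ (Set.Iic 0) = 0)
    (hμint : ∫⁻ z in Set.Ioi (0:ℝ), ENNReal.ofReal (min 1 z) ∂μ ≠ ⊤)
    (k a c : ℝ) (hk : 0 ≤ k) (ha : 0 < a) (hc : c ≤ 0)
    (v : ℝ → ℝ) (hvc : ContinuousOn v (Set.Ici 0))
    (M : ℝ) (hvb : ∀ t ≥ (0:ℝ), |v t| ≤ M) (hv0 : v 0 = 0)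
    (heq : ∀ t ≥ (0:ℝ),
      k * v t + ∫ s in (0:ℝ)..t, (μ (Set.Ioi (t - s))).toReal * v s
        = (c - a) * ∫ s in (0:ℝ)..t, v s) :
    ∀ t ≥ (0:ℝ), v t = 0 := by
  -- continuous extension of v to all of ℝ
  set u : ℝ → ℝ := fun s => v (max s 0) with hu_def
  have hu : Continuous u :=
    hvc.comp_continuous (continuous_id.max continuous_const) (fun x => le_max_right x 0)
  have huv : ∀ s ≥ (0:ℝ), u s = v s := fun s hs => by
    simp only [hu_def, max_eq_left hs]
  have hub : ∀ s, |u s| ≤ M := fun s => hvb _ (le_max_right s 0)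
  have hueq : ∀ t ≥ (0:ℝ),
      k * u t + ∫ s in (0:ℝ)..t, (μ (Set.Ioi (t - s))).toReal * u s
        = (c - a) * ∫ s in (0:ℝ)..t, u s := by
    intro t ht
    have hcongr1 : (∫ s in (0:ℝ)..t, (μ (Set.Ioi (t - s))).toReal * u s)
        = ∫ s in (0:ℝ)..t, (μ (Set.Ioi (t - s))).toReal * v s := by
      refine intervalIntegral.integral_congr fun s hs => ?_
      rw [Set.uIcc_of_le ht] at hs
      rw [huv s hs.1]
    have hcongr2 : (∫ s in (0:ℝ)..t, u s) = ∫ s in (0:ℝ)..t, v s := by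
      refine intervalIntegral.integral_congr fun s hs => ?_
      rw [Set.uIcc_of_le ht] at hs
      exact huv s hs.1
    rw [hcongr1, hcongr2, huv t ht]
    exact heq t ht
  have h1 := primitive_nonpos μ hμ0 hμint k a c hk ha hc u hu M hub hueq
  have hueqneg : ∀ t ≥ (0:ℝ),
      k * (-u t) + ∫ s in (0:ℝ)..t, (μ (Set.Ioi (t - s))).toReal * (-u s)
        = (c - a) * ∫ s in (0:ℝ)..t, (-u s) := by
    intro t ht
    have := hueq t ht
    simp only [mul_neg]
    rw [intervalIntegral.integral_neg, intervalIntegral.integral_neg]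
    linarith
  have h2 := primitive_nonpos μ hμ0 hμint k a c hk ha hc (fun s => -u s) hu.neg M
    (fun s => by rw [abs_neg]; exact hub s) (by simpa using hueqneg)
  have hVzero : ∀ T ≥ (0:ℝ), (∫ s in (0:ℝ)..T, u s) = 0 := by
    intro T hT
    have hle := h1 T hT
    have hge := h2 T hT
    simp only [intervalIntegral.integral_neg, neg_nonpos] at hge
    linarith
  intro t ht
  rcases eq_or_lt_of_le ht with h | h
  · rw [← h]; exact hv0
  · rw [← huv t ht]
    set V : ℝ → ℝ := fun r => ∫ s in (0:ℝ)..r, u s with hV_def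
    have hVd : HasDerivAt V (u t) t :=
      intervalIntegral.integral_hasDerivAt_right (hu.intervalIntegrable 0 t)
        (hu.stronglyMeasurable.stronglyMeasurableAtFilter) hu.continuousAt
    have hVzero' : HasDerivAt V 0 t := by
      refine (hasDerivAt_const t (0:ℝ)).congr_of_eventuallyEq ?_
      filter_upwards [isOpen_Ioi.mem_nhds h] with s hs
      exact hVzero s (le_of_lt hs)
    exact hVd.unique hVzero'
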